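/- The discriminant of the cubic polynomial p₆ + p₄T − T³ in the variable T, namely the polynomial Δ = 4p₄³ − 27p₆² ∈ ℂ[x₀,x₁,x₂], is a nonzero homogeneous polynomial of degree 12. -/

import Mathlib

/-!
`Δ` is Mathlib's discriminant of the cubic `−T³ + 0·T² + p₄T + p₆`. The degrees of its coefficients
`0, ·, 4, 6` form an arithmetic progression (weight `k + i·e` with `k = 0`, `e = 2`), and every
monomial of the discriminant of such a cubic has degree `4k + 6e = 12`. Evaluating at `(1, 1, 0)`,
where `p₄ = p₆ = 1`, gives `Δ = 4 − 27 ≠ 0`.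
-/

open MvPolynomial

/-- `p₄ = x₀³x₁ + x₀x₂³ + x₁³x₂`. -/
noncomputable def p4 : MvPolynomial (Fin 3) ℂ :=
  X 0 ^ 3 * X 1 + X 0 * X 2 ^ 3 + X 1 ^ 3 * X 2

/-- `p₆ = x₀⁵x₂ + x₀x₁⁵ + x₁x₂⁵ − 5x₀²x₁²x₂²`. -/
noncomputable def p6 : MvPolynomial (Fin 3) ℂ :=
  X 0 ^ 5 * X 2 + X 0 * X 1 ^ 5 + X 1 * X 2 ^ 5 - 5 * X 0 ^ 2 * X 1 ^ 2 * X 2 ^ 2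

theorem Cubic.discr_mk_neg_one_zero {R : Type*} [CommRing R] (p q : R) :
    (⟨-1, 0, p, q⟩ : Cubic R).discr = 4 * p ^ 3 - 27 * q ^ 2 := by
  simp only [Cubic.discr]
  ring

theorem MvPolynomial.IsHomogeneous.ofNat_mul {σ R : Type*} [CommRing R] {φ : MvPolynomial σ R}
    {m : ℕ} (hφ : φ.IsHomogeneous m) (c : ℕ) [c.AtLeastTwo] :
    (OfNat.ofNat c * φ : MvPolynomial σ R).IsHomogeneous m := by
  simpa only [map_ofNat] using hφ.C_mul (OfNat.ofNat c)

theorem Cubic.isHomogeneous_discr {σ R : Type*} [CommRing R] {P : Cubic (MvPolynomial σ R)}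
    {k e : ℕ} (ha : P.a.IsHomogeneous k) (hb : P.b.IsHomogeneous (k + e))
    (hc : P.c.IsHomogeneous (k + 2 * e)) (hd : P.d.IsHomogeneous (k + 3 * e)) :
    P.discr.IsHomogeneous (4 * k + 6 * e) := by
  have hbc : (P.b ^ 2 * P.c ^ 2).IsHomogeneous (4 * k + 6 * e) := by
    convert (hb.pow 2).mul (hc.pow 2) using 1; ring
  have hac : (4 * P.a * P.c ^ 3).IsHomogeneous (4 * k + 6 * e) := by
    rw [mul_assoc]; convert (ha.mul (hc.pow 3)).ofNat_mul 4 using 1; ring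
  have hbd : (4 * P.b ^ 3 * P.d).IsHomogeneous (4 * k + 6 * e) := by
    rw [mul_assoc]; convert ((hb.pow 3).mul hd).ofNat_mul 4 using 1; ring
  have had : (27 * P.a ^ 2 * P.d ^ 2).IsHomogeneous (4 * k + 6 * e) := by
    rw [mul_assoc]; convert ((ha.pow 2).mul (hd.pow 2)).ofNat_mul 27 using 1; ring
  have habcd : (18 * P.a * P.b * P.c * P.d).IsHomogeneous (4 * k + 6 * e) := by
    simp only [mul_assoc]
    convert (ha.mul (hb.mul (hc.mul hd))).ofNat_mul 18 using 1; ring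
  exact (((hbc.sub hac).sub hbd).sub had).add habcd

theorem p4_isHomogeneous : p4.IsHomogeneous 4 := by
  refine .add (.add ?_ ?_) ?_
  · exact (isHomogeneous_X_pow 0 3).mul (isHomogeneous_X _ 1)
  · exact (isHomogeneous_X _ 0).mul (isHomogeneous_X_pow 2 3)
  · exact (isHomogeneous_X_pow 1 3).mul (isHomogeneous_X _ 2)

theorem p6_isHomogeneous : p6.IsHomogeneous 6 := by
  refine .sub (.add (.add ?_ ?_) ?_) ?_
  · exact (isHomogeneous_X_pow 0 5).mul (isHomogeneous_X _ 2)
  · exact (isHomogeneous_X _ 0).mul (isHomogeneous_X_pow 1 5)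
  · exact (isHomogeneous_X _ 1).mul (isHomogeneous_X_pow 2 5)
  · simp only [mul_assoc]
    exact ((isHomogeneous_X_pow 0 2).mul ((isHomogeneous_X_pow 1 2).mul
      (isHomogeneous_X_pow 2 2))).ofNat_mul 5

/-- The discriminant `Δ = 4p₄³ − 27p₆²` of the cubic `p₆ + p₄T − T³` is a
nonzero homogeneous polynomial of degree 12. -/
theorem discriminant_nonzero_homogeneous_deg12 :
    (4 * p4 ^ 3 - 27 * p6 ^ 2) ≠ 0 ∧
      (4 * p4 ^ 3 - 27 * p6 ^ 2).IsHomogeneous 12 := by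
  refine ⟨fun hΔ => ?_, ?_⟩
  · have h : eval ![1, 1, 0] (4 * p4 ^ 3 - 27 * p6 ^ 2) = -23 := by
      simp [p4, p6]; norm_num
    rw [hΔ, map_zero] at h
    norm_num at h
  · rw [← Cubic.discr_mk_neg_one_zero]
    exact Cubic.isHomogeneous_discr (k := 0) (e := 2) (isHomogeneous_one ..).neg
      (isHomogeneous_zero ..) p4_isHomogeneous p6_isHomogeneous
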